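/- arXiv:2312.12032 — 2 statements merged into one kernel-verified Lean document; each statement's English description precedes it below -/
import Mathlib

section
/- Let f : ℝⁿ → ℝ be locally Lipschitz, ε > 0, x₀ ∈ ℝⁿ, and v̄ the negative of the minimum-norm element of ∂_ε f(x₀). If v̄ ≠ 0, then f(x₀ + (ε/‖v̄‖) v̄) ≤ f(x₀) - ε‖v̄‖. -/
open Filter Set Topology RealInnerProductSpace

noncomputable def clarkeDir {E : Type*} [NormedAddCommGroup E] [InnerProductSpace ℝ E]
    (f : E → ℝ) (x v : E) : ℝ :=
  Filter.limsup (fun p : E × ℝ => (f (p.1 + p.2 • v) - f p.1) / p.2)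
    ((nhds x) ×ˢ (nhdsWithin 0 (Set.Ioi 0)))

noncomputable def clarkeSubdiff {E : Type*} [NormedAddCommGroup E] [InnerProductSpace ℝ E]
    (f : E → ℝ) (x : E) : Set E :=
  {ξ | ∀ v, ⟪ξ, v⟫ ≤ clarkeDir f x v}

noncomputable def goldsteinSubdiff {E : Type*} [NormedAddCommGroup E] [InnerProductSpace ℝ E]
    (f : E → ℝ) (ε : ℝ) (x : E) : Set E :=
  convexHull ℝ (⋃ y ∈ Metric.closedBall x ε, clarkeSubdiff f y)

/-!
Because `-v̄` is the point of the convex set `∂_ε f(x₀)` closest to the origin, every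
`ξ ∈ ∂_ε f(x₀)` satisfies `⟪ξ, v̄⟫ ≤ -‖v̄‖²`. The Clarke derivative `f°(y; ·)` of a locally
Lipschitz function is sublinear and bounded by a multiple of the norm, so by Hahn–Banach and Riesz
the value `f°(y; v̄)` is `⟪ξ, v̄⟫` for some `ξ ∈ ∂f(y)`. Hence `f°(y; v̄) ≤ -‖v̄‖²` on the segment
from `x₀` to `x₀ + (ε / ‖v̄‖) • v̄`, which lies in the closed `ε`-ball. The right Dini derivative of
`t ↦ f (x₀ + t • v̄)` is at most `f°(x₀ + t • v̄; v̄)`, and the mean value inequality integrates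
this bound over `[0, ε / ‖v̄‖]`.
-/

abbrev clarkeFilter {E : Type*} [TopologicalSpace E] (x : E) : Filter (E × ℝ) := 𝓝 x ×ˢ 𝓝[>] 0

theorem map_clarkeFilter_mul {E : Type*} [TopologicalSpace E] {c : ℝ} (hc : 0 < c) (x : E) :
    map (fun p : E × ℝ => (p.1, c * p.2)) (clarkeFilter x) = clarkeFilter x := by
  have hmul : map (c * ·) (𝓝[>] (0 : ℝ)) = 𝓝[>] 0 := by
    simpa [image_mul_left_Ioi hc] using
      (Homeomorph.mulLeft₀ c hc.ne').isEmbedding.map_nhdsWithin_eq (Ioi 0) 0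
  calc map (fun p : E × ℝ => (p.1, c * p.2)) (clarkeFilter x)
      = map id (𝓝 x) ×ˢ map (c * ·) (𝓝[>] 0) :=
        (prod_map_map_eq (m₁ := id) (m₂ := (c * ·))).symm
    _ = clarkeFilter x := by rw [map_id, hmul]

section ClarkeQuotient

variable {E : Type*} [NormedAddCommGroup E] [NormedSpace ℝ E] {f : E → ℝ}

noncomputable def clarkeQuotient (f : E → ℝ) (v : E) (p : E × ℝ) : ℝ :=
  (f (p.1 + p.2 • v) - f p.1) / p.2

theorem tendsto_clarkeFilter_add_smul (x v : E) :
    Tendsto (fun p : E × ℝ => (p.1 + p.2 • v, p.2)) (clarkeFilter x) (clarkeFilter x) := by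
  refine Tendsto.prodMk ?_ tendsto_snd
  have hsnd : Tendsto (fun p : E × ℝ => p.2) (clarkeFilter x) (𝓝 0) :=
    tendsto_snd.mono_right nhdsWithin_le_nhds
  simpa using (tendsto_fst (f := 𝓝 x) (g := 𝓝[>] (0 : ℝ))).add (hsnd.smul_const v)

theorem eventually_abs_clarkeQuotient_le {K : NNReal} {t : Set E} {x : E}
    (hK : LipschitzOnWith K f t) (ht : t ∈ 𝓝 x) (v : E) :
    ∀ᶠ p in clarkeFilter x, |clarkeQuotient f v p| ≤ K * ‖v‖ := by
  have hbase : ∀ᶠ p in clarkeFilter x, p.1 ∈ t := tendsto_fst.eventually ht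
  have hshift : ∀ᶠ p in clarkeFilter x, p.1 + p.2 • v ∈ t :=
    (tendsto_fst.comp (tendsto_clarkeFilter_add_smul x v)).eventually ht
  have hpos : ∀ᶠ p in clarkeFilter x, 0 < p.2 := tendsto_snd.eventually self_mem_nhdsWithin
  filter_upwards [hbase, hshift, hpos] with p hp hpv hp2
  have hlip := hK.dist_le_mul _ hpv _ hp
  rw [Real.dist_eq, dist_self_add_left, norm_smul, Real.norm_of_nonneg hp2.le] at hlip
  rw [clarkeQuotient, abs_div, abs_of_pos hp2, div_le_iff₀ hp2]
  linarith

theorem isBoundedUnder_clarkeQuotient {K : NNReal} {t : Set E} {x : E}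
    (hK : LipschitzOnWith K f t) (ht : t ∈ 𝓝 x) (v : E) :
    IsBoundedUnder (· ≤ ·) (clarkeFilter x) (clarkeQuotient f v) ∧
      IsBoundedUnder (· ≥ ·) (clarkeFilter x) (clarkeQuotient f v) :=
  isBoundedUnder_le_abs.1 <|
    isBoundedUnder_of_eventually_le (eventually_abs_clarkeQuotient_le hK ht v)

theorem LocallyLipschitz.isBoundedUnder_clarkeQuotient (hf : LocallyLipschitz f) (x v : E) :
    IsBoundedUnder (· ≤ ·) (clarkeFilter x) (clarkeQuotient f v) ∧
      IsBoundedUnder (· ≥ ·) (clarkeFilter x) (clarkeQuotient f v) :=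
  let ⟨_, _, ht, hK⟩ := hf x
  _root_.isBoundedUnder_clarkeQuotient hK ht v

end ClarkeQuotient

section ClarkeDir

variable {E : Type*} [NormedAddCommGroup E] [InnerProductSpace ℝ E] {f : E → ℝ}

theorem Convex.inner_le_neg_sq_norm_of_isMinOn {S : Set E} (hS : Convex ℝ S) {v : E}
    (hv : -v ∈ S) (hmin : IsMinOn (‖·‖) S (-v)) (ξ : E) (hξ : ξ ∈ S) : ⟪ξ, v⟫ ≤ -‖v‖ ^ 2 := by
  have hinf : ‖0 - -v‖ = ⨅ w : S, ‖0 - (w : E)‖ := by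
    have : Nonempty S := ⟨⟨-v, hv⟩⟩
    simp only [zero_sub, norm_neg]
    refine le_antisymm (le_ciInf fun w => by simpa using isMinOn_iff.1 hmin w w.2) ?_
    simpa using ciInf_le (f := fun w : S => ‖(w : E)‖) ⟨0, by rintro _ ⟨w, rfl⟩; positivity⟩
      ⟨-v, hv⟩
  have h := (norm_eq_iInf_iff_real_inner_le_zero hS hv).1 hinf ξ hξ
  rw [zero_sub, neg_neg, sub_neg_eq_add, inner_add_right, real_inner_self_eq_norm_sq,
    real_inner_comm] at h
  linarith

theorem clarkeDir_eq_limsup (f : E → ℝ) (x v : E) :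
    clarkeDir f x v = limsup (clarkeQuotient f v) (clarkeFilter x) := rfl

theorem clarkeDir_zero (f : E → ℝ) (x : E) : clarkeDir f x 0 = 0 := by
  simp [clarkeDir]

theorem clarkeDir_le_mul_norm {K : NNReal} {t : Set E} {x : E}
    (hK : LipschitzOnWith K f t) (ht : t ∈ 𝓝 x) (v : E) : clarkeDir f x v ≤ K * ‖v‖ :=
  limsup_le_of_le (isBoundedUnder_clarkeQuotient hK ht v).2.isCoboundedUnder_le
    ((eventually_abs_clarkeQuotient_le hK ht v).mono fun _ h => (le_abs_self _).trans h)

namespace LocallyLipschitz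

theorem clarkeDir_add_le (hf : LocallyLipschitz f) (x v w : E) :
    clarkeDir f x (v + w) ≤ clarkeDir f x v + clarkeDir f x w := by
  set φ : E × ℝ → E × ℝ := fun p => (p.1 + p.2 • v, p.2)
  have hφ : Tendsto φ (clarkeFilter x) (clarkeFilter x) := tendsto_clarkeFilter_add_smul x v
  have hsplit : clarkeQuotient f (v + w) = clarkeQuotient f v + clarkeQuotient f w ∘ φ := by
    ext p
    simp only [clarkeQuotient, φ, Pi.add_apply, Function.comp_apply, smul_add, add_assoc]
    ring
  obtain ⟨hv_le, hv_ge⟩ := hf.isBoundedUnder_clarkeQuotient x v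
  obtain ⟨hw_le, hw_ge⟩ := hf.isBoundedUnder_clarkeQuotient x w
  have hwφ_le : IsBoundedUnder (· ≤ ·) (clarkeFilter x) (clarkeQuotient f w ∘ φ) :=
    isBoundedUnder_map_iff.1 (hw_le.mono hφ)
  have hwφ_co : IsCoboundedUnder (· ≤ ·) (clarkeFilter x) (clarkeQuotient f w ∘ φ) :=
    (isBoundedUnder_map_iff.1 (hw_ge.mono hφ)).isCoboundedUnder_le
  calc clarkeDir f x (v + w)
      ≤ clarkeDir f x v + limsup (clarkeQuotient f w ∘ φ) (clarkeFilter x) := by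
        rw [clarkeDir_eq_limsup, hsplit]
        exact limsup_add_le hv_ge hv_le hwφ_co hwφ_le
    _ ≤ clarkeDir f x v + clarkeDir f x w := by
        gcongr
        rw [limsup_comp]
        exact limsup_le_limsup_of_le hφ hwφ_co hw_le

theorem clarkeDir_smul (hf : LocallyLipschitz f) (x v : E) {c : ℝ} (hc : 0 < c) :
    clarkeDir f x (c • v) = c * clarkeDir f x v := by
  have hrescale : clarkeQuotient f (c • v) =
      (fun p => c * clarkeQuotient f v p) ∘ fun p : E × ℝ => (p.1, c * p.2) := by
    ext ⟨y, s⟩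
    rcases eq_or_ne s 0 with rfl | hs
    · simp [clarkeQuotient]
    · simp only [clarkeQuotient, Function.comp_apply, smul_smul, mul_comm s c]
      field_simp
  obtain ⟨h_le, h_ge⟩ := hf.isBoundedUnder_clarkeQuotient x v
  let g := OrderIso.mulLeft₀ c hc
  rw [clarkeDir_eq_limsup, hrescale, limsup_comp, map_clarkeFilter_mul hc]
  exact (g.limsup_apply h_le h_ge.isCoboundedUnder_le
    (h_le.comp (q := (· ≤ ·)) fun _ _ h => g.monotone h)
    (h_ge.comp (q := (· ≥ ·)) fun _ _ h => g.monotone h).isCoboundedUnder_le).symm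

theorem mul_clarkeDir_le (hf : LocallyLipschitz f) (x v : E) (c : ℝ) :
    c * clarkeDir f x v ≤ clarkeDir f x (c • v) := by
  rcases lt_trichotomy c 0 with hc | rfl | hc
  · have h := hf.clarkeDir_add_le x (c • v) (-c • v)
    rw [← add_smul, add_neg_cancel, zero_smul, clarkeDir_zero,
      hf.clarkeDir_smul x v (neg_pos.2 hc)] at h
    linarith
  · simp [clarkeDir_zero]
  · exact (hf.clarkeDir_smul x v hc).ge

theorem exists_mem_clarkeSubdiff_inner_eq [CompleteSpace E] (hf : LocallyLipschitz f) (x v : E) :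
    ∃ ξ ∈ clarkeSubdiff f x, ⟪ξ, v⟫ = clarkeDir f x v := by
  obtain ⟨K, t, ht, hK⟩ := hf x
  set N := clarkeDir f x
  let g : E →ₗ.[ℝ] ℝ := LinearPMap.mkSpanSingleton' v (N v) fun c hc => by
    rcases smul_eq_zero.1 hc with rfl | rfl
    · simp
    · simp [N, clarkeDir_zero]
  have hgN : ∀ z : g.domain, g z ≤ N z := by
    rintro ⟨z, hz⟩
    obtain ⟨c, rfl⟩ := Submodule.mem_span_singleton.1 hz
    rw [LinearPMap.mkSpanSingleton'_apply, smul_eq_mul]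
    exact hf.mul_clarkeDir_le x v c
  obtain ⟨φ, hφg, hφN⟩ := exists_extension_of_le_sublinear g N
    (fun c hc z => hf.clarkeDir_smul x z hc) (hf.clarkeDir_add_le x) hgN
  have hφ_bound : ∀ w, ‖φ w‖ ≤ K * ‖w‖ := fun w => by
    have hle := (hφN w).trans (clarkeDir_le_mul_norm hK ht w)
    have hge := (hφN (-w)).trans (clarkeDir_le_mul_norm hK ht (-w))
    rw [map_neg, norm_neg] at hge
    exact abs_le.2 ⟨by linarith, hle⟩
  refine ⟨(InnerProductSpace.toDual ℝ E).symm (φ.mkContinuous K hφ_bound), fun w => ?_, ?_⟩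
  · simpa using hφN w
  · rw [InnerProductSpace.toDual_symm_apply, LinearMap.mkContinuous_apply,
      hφg ⟨v, Submodule.mem_span_singleton_self v⟩]
    exact LinearPMap.mkSpanSingleton'_apply_self _ _ _ _

theorem le_add_mul_of_clarkeDir_le (hf : LocallyLipschitz f) (x v : E) {T c : ℝ} (hT : 0 ≤ T)
    (hc : ∀ t ∈ Ico 0 T, clarkeDir f (x + t • v) v ≤ c) : f (x + T • v) ≤ f x + c * T := by
  let g : ℝ → ℝ := fun t => f (x + t • v)
  have hg : Continuous g := hf.continuous.comp (by fun_prop)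
  refine image_le_of_liminf_slope_right_le_deriv_boundary (f := g) (B := fun t => f x + c * t)
    hg.continuousOn (by simp [g]) (by fun_prop)
    (fun t _ => (((hasDerivAt_id t).const_mul c).const_add (f x)).hasDerivWithinAt.congr_deriv
      (mul_one c)) ?_ (right_mem_Icc.2 hT)
  intro t ht r hr
  have hq : ∀ᶠ p in clarkeFilter (x + t • v), clarkeQuotient f v p < r :=
    eventually_lt_of_limsup_lt ((hc t ht).trans_lt hr) (hf.isBoundedUnder_clarkeQuotient _ v).1
  have hslope : ∀ᶠ h in 𝓝[>] 0, slope g t (t + h) < r := by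
    filter_upwards [(tendsto_const_nhds.prodMk tendsto_id).eventually hq] with h hh
    simpa [slope_def_field, clarkeQuotient, g, add_smul, add_assoc] using hh
  have hmap : map (t + ·) (𝓝[>] 0) = 𝓝[>] t := by
    simpa only [add_zero] using map_add_left_nhdsGT (c := t) (a := 0)
  rw [← hmap, frequently_map]
  exact hslope.frequently

theorem clarkeDir_le_of_goldsteinSubdiff_inner_le [CompleteSpace E]
    (hf : LocallyLipschitz f) {ε c : ℝ} {x y : E} (hy : y ∈ Metric.closedBall x ε) (v : E)
    (h : ∀ ξ ∈ goldsteinSubdiff f ε x, ⟪ξ, v⟫ ≤ c) : clarkeDir f y v ≤ c := by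
  obtain ⟨ξ, hξ, hξv⟩ := hf.exists_mem_clarkeSubdiff_inner_eq y v
  exact hξv ▸ h ξ (subset_convexHull ℝ _ (mem_biUnion hy hξ))

end LocallyLipschitz

end ClarkeDir

theorem stmt2_general {n : ℕ} (f : EuclideanSpace ℝ (Fin n) → ℝ) (hf : LocallyLipschitz f)
    (ε : ℝ) (hε : 0 < ε) (x₀ vbar : EuclideanSpace ℝ (Fin n))
    (hmem : -vbar ∈ goldsteinSubdiff f ε x₀)
    (hmin : ∀ ξ ∈ goldsteinSubdiff f ε x₀, ‖-vbar‖ ≤ ‖ξ‖) :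
    f (x₀ + (ε / ‖vbar‖) • vbar) ≤ f x₀ - ε * ‖vbar‖ := by
  obtain rfl | hne := eq_or_ne vbar 0
  · simp
  have hv : 0 < ‖vbar‖ := norm_pos_iff.2 hne
  have hinner : ∀ ξ ∈ goldsteinSubdiff f ε x₀, ⟪ξ, vbar⟫ ≤ -‖vbar‖ ^ 2 :=
    (convex_convexHull ℝ _).inner_le_neg_sq_norm_of_isMinOn hmem (isMinOn_iff.2 hmin)
  have hdir : ∀ t ∈ Ico 0 (ε / ‖vbar‖), clarkeDir f (x₀ + t • vbar) vbar ≤ -‖vbar‖ ^ 2 := by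
    intro t ht
    refine hf.clarkeDir_le_of_goldsteinSubdiff_inner_le ?_ vbar hinner
    rw [mem_closedBall_iff_norm, add_sub_cancel_left, norm_smul, Real.norm_of_nonneg ht.1,
      ← le_div_iff₀ hv]
    exact ht.2.le
  calc f (x₀ + (ε / ‖vbar‖) • vbar) ≤ f x₀ + -‖vbar‖ ^ 2 * (ε / ‖vbar‖) :=
        hf.le_add_mul_of_clarkeDir_le x₀ vbar (by positivity) hdir
    _ = f x₀ - ε * ‖vbar‖ := by field_simp; ring

theorem stmt2 {n : ℕ} (f : EuclideanSpace ℝ (Fin n) → ℝ) (hf : LocallyLipschitz f)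
    (ε : ℝ) (hε : 0 < ε) (x₀ vbar : EuclideanSpace ℝ (Fin n))
    (hmem : -vbar ∈ goldsteinSubdiff f ε x₀)
    (hmin : ∀ ξ ∈ goldsteinSubdiff f ε x₀, ‖-vbar‖ ≤ ‖ξ‖)
    (hne : vbar ≠ 0) :
    f (x₀ + (ε / ‖vbar‖) • vbar) ≤ f x₀ - ε * ‖vbar‖ :=
  stmt2_general f hf ε hε x₀ vbar hmem hmin
end

section
/- Let h : ℝ → ℝ be continuous, and let (a_j),(b_j),(t_j) be generated by the bisection with a₁=0, b₁=T>0, h(a₁)<h(b₁), converging to the common limit t̄. Let (j_i) enumerate the indices with t_{j_i} < t̄. Then for all i, (h(t_{j_i}) - h(t̄))/(t̄ - t_{j_i}) < 0; in particular, liminf_{s↘0} (h(t̄ - s) - h(t̄))/s ≤ 0. -/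
open Filter Set Topology

def BisectStep (h : ℝ → ℝ) (a b : ℕ → ℝ) : Prop :=
  ∀ j, (h (b j) > h ((a j + b j) / 2) →
          a (j + 1) = (a j + b j) / 2 ∧ b (j + 1) = b j) ∧
       (¬ h (b j) > h ((a j + b j) / 2) →
          a (j + 1) = a j ∧ b (j + 1) = (a j + b j) / 2)

/-!
Along the bisection `h (b j)` increases to `h t̄`, and a step moves `a` to the midpoint `t j` only
when `h (t j) < h (b j) ≤ h t̄`; a midpoint `t j < t̄` can only be such a step, since otherwise
`b (j + 1) = t j < t̄ ≤ b (j + 1)`. The invariant `h (a j) < h (b j) ≤ h t̄` keeps `a j < t̄`, so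
`a` must move infinitely often, which gives midpoints `t j < t̄` arbitrarily close to `t̄`.
-/

lemma Real.liminf_nonpos_of_frequently_nonpos {α : Type*} {f : Filter α} {u : α → ℝ}
    (hu : ∃ᶠ x in f, u x ≤ 0) : liminf u f ≤ 0 := by
  rw [liminf_eq]
  refine Real.sSup_nonpos fun c hc => ?_
  obtain ⟨x, hcx, hx⟩ := ((show ∀ᶠ x in f, c ≤ u x from hc).and_frequently hu).exists
  exact hcx.trans hx

namespace BisectStep

variable {h : ℝ → ℝ} {a b : ℕ → ℝ}

lemma update (hs : BisectStep h a b) (j : ℕ) :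
    (h ((a j + b j) / 2) < h (b j) ∧ a (j + 1) = (a j + b j) / 2 ∧ b (j + 1) = b j) ∨
      (h (b j) ≤ h ((a j + b j) / 2) ∧ a (j + 1) = a j ∧ b (j + 1) = (a j + b j) / 2) := by
  by_cases hj : h (b j) > h ((a j + b j) / 2)
  · exact Or.inl ⟨hj, (hs j).1 hj⟩
  · exact Or.inr ⟨not_lt.1 hj, (hs j).2 hj⟩

lemma sub_eq (hs : BisectStep h a b) (j : ℕ) : b j - a j = (b 0 - a 0) / 2 ^ j := by
  induction j with
  | zero => simp
  | succ j ih =>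
    rw [pow_succ, ← div_div, ← ih]
    rcases hs.update j with ⟨-, ha, hb⟩ | ⟨-, ha, hb⟩ <;> rw [ha, hb] <;> ring

lemma tendsto_sub (hs : BisectStep h a b) : Tendsto (fun j => b j - a j) atTop (𝓝 0) := by
  refine (tendsto_const_nhds.div_atTop (tendsto_pow_atTop_atTop_of_one_lt one_lt_two)).congr
    fun j => (hs.sub_eq j).symm

lemma left_le_right (hs : BisectStep h a b) (h0 : a 0 ≤ b 0) (j : ℕ) : a j ≤ b j := by
  have := hs.sub_eq j
  have : 0 ≤ (b 0 - a 0) / 2 ^ j := div_nonneg (sub_nonneg.2 h0) (by positivity)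
  linarith

lemma monotone_left (hs : BisectStep h a b) (h0 : a 0 ≤ b 0) : Monotone a := by
  refine monotone_nat_of_le_succ fun j => ?_
  have := hs.left_le_right h0 j
  rcases hs.update j with ⟨-, ha, -⟩ | ⟨-, ha, -⟩
  · rw [ha]; linarith
  · rw [ha]

lemma antitone_right (hs : BisectStep h a b) (h0 : a 0 ≤ b 0) : Antitone b := by
  refine antitone_nat_of_succ_le fun j => ?_
  have := hs.left_le_right h0 j
  rcases hs.update j with ⟨-, -, hb⟩ | ⟨-, -, hb⟩
  · rw [hb]
  · rw [hb]; linarith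

lemma monotone_comp_right (hs : BisectStep h a b) : Monotone (h ∘ b) := by
  refine monotone_nat_of_le_succ fun j => ?_
  rcases hs.update j with ⟨-, -, hb⟩ | ⟨hle, -, hb⟩
  · simp only [Function.comp_apply, hb, le_rfl]
  · simpa only [Function.comp_apply, hb] using hle

lemma comp_left_lt_comp_right (hs : BisectStep h a b) (hinit : h (a 0) < h (b 0)) (j : ℕ) :
    h (a j) < h (b j) := by
  induction j with
  | zero => exact hinit
  | succ j ih =>
    rcases hs.update j with ⟨hlt, ha, hb⟩ | ⟨hle, ha, hb⟩
    · rwa [ha, hb]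
    · rw [ha, hb]; exact ih.trans_le hle

section Limit

variable {tbar : ℝ} (hlim : Tendsto (fun j => (a j + b j) / 2) atTop (𝓝 tbar))
include hlim

lemma tendsto_left (hs : BisectStep h a b) : Tendsto a atTop (𝓝 tbar) := by
  have := hlim.sub (hs.tendsto_sub.div_const 2)
  rw [zero_div, sub_zero] at this
  exact this.congr fun j => by ring

lemma tendsto_right (hs : BisectStep h a b) : Tendsto b atTop (𝓝 tbar) := by
  have := hlim.add (hs.tendsto_sub.div_const 2)
  rw [zero_div, add_zero] at this
  exact this.congr fun j => by ring

lemma comp_right_le (hs : BisectStep h a b) (hcont : ContinuousAt h tbar) (j : ℕ) :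
    h (b j) ≤ h tbar :=
  hs.monotone_comp_right.ge_of_tendsto (hcont.tendsto.comp (hs.tendsto_right hlim)) j

lemma left_lt (hs : BisectStep h a b) (hcont : ContinuousAt h tbar) (h0 : a 0 ≤ b 0)
    (hinit : h (a 0) < h (b 0)) (j : ℕ) : a j < tbar := by
  refine ((hs.monotone_left h0).ge_of_tendsto (hs.tendsto_left hlim) j).lt_of_ne ?_
  rintro rfl
  exact (hs.comp_left_lt_comp_right hinit j).not_ge (hs.comp_right_le hlim hcont j)

lemma comp_mid_lt (hs : BisectStep h a b) (hcont : ContinuousAt h tbar) (h0 : a 0 ≤ b 0)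
    {j : ℕ} (hj : (a j + b j) / 2 < tbar) : h ((a j + b j) / 2) < h tbar := by
  rcases hs.update j with ⟨hlt, -, -⟩ | ⟨-, -, hb⟩
  · exact hlt.trans_le (hs.comp_right_le hlim hcont j)
  · have := (hs.antitone_right h0).le_of_tendsto (hs.tendsto_right hlim) (j + 1)
    rw [hb] at this
    exact absurd hj this.not_gt

lemma frequently_mid_lt (hs : BisectStep h a b) (hcont : ContinuousAt h tbar)
    (h0 : a 0 ≤ b 0) (hinit : h (a 0) < h (b 0)) :
    ∃ᶠ j in atTop, (a j + b j) / 2 < tbar := by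
  by_contra hfreq
  obtain ⟨J, hJ⟩ := eventually_atTop.1 (not_frequently.1 hfreq)
  have hconst : ∀ j ≥ J, a j = a J := by
    refine Nat.le_induction rfl fun j hj ih => ?_
    rcases hs.update j with ⟨-, ha, -⟩ | ⟨-, ha, -⟩
    · -- moving `a` to a midpoint `≥ t̄` would break `a (j + 1) < t̄`
      exact absurd (ha ▸ hs.left_lt hlim hcont h0 hinit (j + 1)) (hJ j hj)
    · rw [ha, ih]
  have := tendsto_nhds_unique (tendsto_atTop_of_eventually_const hconst) (hs.tendsto_left hlim)
  exact (hs.left_lt hlim hcont h0 hinit J).ne this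

end Limit

end BisectStep

theorem stmt7 (h : ℝ → ℝ) (hcont : Continuous h) (T : ℝ) (hT : 0 < T)
    (a b : ℕ → ℝ) (ha0 : a 0 = 0) (hb0 : b 0 = T)
    (hinit : h (a 0) < h (b 0)) (hstep : BisectStep h a b)
    (tbar : ℝ) (hlim : Tendsto (fun j => (a j + b j) / 2) atTop (𝓝 tbar)) :
    (∀ j, (a j + b j) / 2 < tbar →
        (h ((a j + b j) / 2) - h tbar) / (tbar - (a j + b j) / 2) < 0) ∧
    Filter.liminf (fun s : ℝ => (h (tbar - s) - h tbar) / s)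
      (nhdsWithin 0 (Set.Ioi 0)) ≤ 0 := by
  have h0 : a 0 ≤ b 0 := by rw [ha0, hb0]; exact hT.le
  have hquot : ∀ j, (a j + b j) / 2 < tbar →
      (h ((a j + b j) / 2) - h tbar) / (tbar - (a j + b j) / 2) < 0 := fun j hj =>
    div_neg_of_neg_of_pos (sub_neg.2 (hstep.comp_mid_lt hlim hcont.continuousAt h0 hj))
      (sub_pos.2 hj)
  refine ⟨hquot, Real.liminf_nonpos_of_frequently_nonpos ?_⟩
  have hgap : Tendsto (fun j => tbar - (a j + b j) / 2) atTop (𝓝 0) := by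
    simpa using (tendsto_const_nhds (x := tbar)).sub hlim
  rw [frequently_nhdsWithin_iff]
  refine hgap.frequently ((hstep.frequently_mid_lt hlim hcont.continuousAt h0 hinit).mono
    fun j hj => ⟨?_, sub_pos.2 hj⟩)
  rw [sub_sub_cancel]
  exact (hquot j hj).le
end
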